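/- arXiv:2507.09829 — 2 statements merged into one kernel-verified Lean document; each statement's English description precedes it below -/
import Mathlib

section
/- Pappus' theorem as an unexpected-line statement: if p1,...,p9 ∈ P²(k) with p1,p2,p3 collinear on a line ℓ, p4,p5,p6 collinear on a line ℓ' ≠ ℓ, all six points distinct and none equal to ℓ ∩ ℓ', and p7, p8, p9 are the pairwise intersections p7 = line(p1,p5) ∩ line(p2,p4), p8 = line(p1,p6) ∩ line(p3,p4), p9 = line(p2,p6) ∩ line(p3,p5), then p7, p8, p9 are collinear. -/
open Matrix

section PappusAux

variable {K : Type*} [Field K]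

/-- Determinant of three row vectors. -/
private def det3 (x y z : Fin 3 → K) : K := Matrix.det (Matrix.of ![x, y, z])

private lemma det3_expand (x y z : Fin 3 → K) :
    det3 x y z = x 0 * y 1 * z 2 - x 0 * y 2 * z 1 - x 1 * y 0 * z 2
      + x 1 * y 2 * z 0 + x 2 * y 0 * z 1 - x 2 * y 1 * z 0 := by
  simp [det3, Matrix.det_fin_three]

private lemma cross_cross_expand (p q r s : Fin 3 → K) :
    (p ⨯₃ q) ⨯₃ (r ⨯₃ s) = det3 p q s • r - det3 p q r • s := by
  funext i
  fin_cases i <;>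
    simp [cross_apply, det3_expand, Pi.sub_apply, Pi.smul_apply] <;> ring

private lemma cross_cross_dot (X Y v : Fin 3 → K) :
    (X ⨯₃ Y) ⨯₃ v = (X ⬝ᵥ v) • Y - (Y ⬝ᵥ v) • X := by
  funext i
  fin_cases i <;>
    simp [cross_apply, dotProduct, Fin.sum_univ_three, Pi.sub_apply, Pi.smul_apply] <;>
    ring

private lemma dot_eq_det3 (p q v : Fin 3 → K) : (p ⨯₃ q) ⬝ᵥ v = det3 p q v := by
  simp [cross_apply, dotProduct, Fin.sum_univ_three, det3_expand]; ring

private lemma cross_eq_zero_imp (m v : Fin 3 → K) (h : m ⨯₃ v = 0) (hm : m ≠ 0) :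
    ∃ c : K, v = c • m := by
  have h0 := congrFun h 0
  have h1 := congrFun h 1
  have h2 := congrFun h 2
  simp [cross_apply] at h0 h1 h2
  have hm' : m 0 ≠ 0 ∨ m 1 ≠ 0 ∨ m 2 ≠ 0 := by
    by_contra hc
    push_neg at hc
    exact hm (by funext i; fin_cases i <;> simp [hc.1, hc.2.1, hc.2.2])
  rcases hm' with h' | h' | h'
  · refine ⟨v 0 / m 0, ?_⟩
    funext i; fin_cases i <;> simp [Pi.smul_apply] <;> field_simp
    · linear_combination h2
    · linear_combination -h1
  · refine ⟨v 1 / m 1, ?_⟩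
    funext i; fin_cases i <;> simp [Pi.smul_apply] <;> field_simp
    · linear_combination -h2
    · linear_combination h0
  · refine ⟨v 2 / m 2, ?_⟩
    funext i; fin_cases i <;> simp [Pi.smul_apply] <;> field_simp
    · linear_combination h1
    · linear_combination -h0

private lemma solve2 (a0 a1 a2 b0 b1 b2 x0 x1 x2 : K) (hn : a0 * b1 - a1 * b0 ≠ 0)
    (hd : a0 * b1 * x2 - a0 * b2 * x1 - a1 * b0 * x2 + a1 * b2 * x0 + a2 * b0 * x1
      - a2 * b1 * x0 = 0) :
    ∃ s t : K, x0 = s * a0 + t * b0 ∧ x1 = s * a1 + t * b1 ∧ x2 = s * a2 + t * b2 := by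
  refine ⟨(x0 * b1 - x1 * b0) / (a0 * b1 - a1 * b0),
    (a0 * x1 - a1 * x0) / (a0 * b1 - a1 * b0), ?_, ?_, ?_⟩ <;>
    rw [div_mul_eq_mul_div, div_mul_eq_mul_div, ← add_div, eq_div_iff hn] <;> ring_nf
  linear_combination hd

private lemma span2 (a b x : Fin 3 → K) (hd : det3 a b x = 0) (hn : a ⨯₃ b ≠ 0) :
    ∃ s t : K, x = s • a + t • b := by
  have hn' : (a ⨯₃ b) 0 ≠ 0 ∨ (a ⨯₃ b) 1 ≠ 0 ∨ (a ⨯₃ b) 2 ≠ 0 := by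
    by_contra hc
    push_neg at hc
    exact hn (by funext i; fin_cases i <;> simp [hc.1, hc.2.1, hc.2.2])
  rw [det3_expand] at hd
  simp [cross_apply] at hn'
  rcases hn' with h' | h' | h'
  · obtain ⟨s, t, e1, e2, e0⟩ := solve2 (a 1) (a 2) (a 0) (b 1) (b 2) (b 0)
      (x 1) (x 2) (x 0) h' (by linear_combination hd)
    exact ⟨s, t, by funext i; fin_cases i <;>
      simp [Pi.add_apply, Pi.smul_apply] <;> [exact e0; exact e1; exact e2]⟩
  · obtain ⟨s, t, e2, e0, e1⟩ := solve2 (a 2) (a 0) (a 1) (b 2) (b 0) (b 1)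
      (x 2) (x 0) (x 1) h' (by linear_combination hd)
    exact ⟨s, t, by funext i; fin_cases i <;>
      simp [Pi.add_apply, Pi.smul_apply] <;> [exact e0; exact e1; exact e2]⟩
  · obtain ⟨s, t, e0, e1, e2⟩ := solve2 (a 0) (a 1) (a 2) (b 0) (b 1) (b 2)
      (x 0) (x 1) (x 2) h' (by linear_combination hd)
    exact ⟨s, t, by funext i; fin_cases i <;>
      simp [Pi.add_apply, Pi.smul_apply] <;> [exact e0; exact e1; exact e2]⟩

/-- distinct projective points have non-parallel representatives -/
private lemma rep_cross_ne (p q : Projectivization K (Fin 3 → K)) (h : p ≠ q) :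
    p.rep ⨯₃ q.rep ≠ 0 := by
  intro hc
  obtain ⟨c, hc'⟩ := cross_eq_zero_imp p.rep q.rep hc p.rep_nonzero
  apply h
  have := (Projectivization.mk_eq_mk_iff' K q.rep p.rep q.rep_nonzero p.rep_nonzero).2
    ⟨c, hc'.symm⟩
  rw [Projectivization.mk_rep, Projectivization.mk_rep] at this
  exact this.symm

private lemma combo_ne_zero (x y : Fin 3 → K) (hxy : x ⨯₃ y ≠ 0) {α β : K} (hβ : β ≠ 0) :
    α • x - β • y ≠ 0 := by
  intro h
  apply hxy
  have h' : β • y = α • x := by linear_combination (norm := module) -h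
  have hy : y = β⁻¹ • (α • x) := by
    rw [← h', smul_smul, inv_mul_cancel₀ hβ, one_smul]
  rw [hy, LinearMap.map_smul, LinearMap.map_smul, cross_self]
  simp

private lemma det3_smul3 (x y z : Fin 3 → K) (c1 c2 c3 : K) :
    det3 (c1 • x) (c2 • y) (c3 • z) = c1 * c2 * c3 * det3 x y z := by
  simp [det3_expand, Pi.smul_apply]; ring

private lemma det_combo (b d c e : Fin 3 → K) (x1 y1 x2 y2 x3 y3 : K) :
    det3 (x1 • b - y1 • d) (x2 • c - y2 • d) (x3 • c - y3 • e)
      = -(x1 * x2 * y3) * det3 b c e - x1 * y2 * x3 * det3 b d c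
        + x1 * y2 * y3 * det3 b d e + y1 * x2 * y3 * det3 d c e := by
  simp [det3_expand, Pi.sub_apply, Pi.smul_apply]; ring

-- bracket substitution lemmas
private lemma br1 (a d e : Fin 3 → K) (u w : K) :
    det3 a (u • d + w • e) d = w * det3 a e d := by
  simp [det3_expand, Pi.add_apply, Pi.smul_apply]; ring

private lemma br2 (a b d e : Fin 3 → K) (s t u w : K) :
    det3 a (u • d + w • e) (s • a + t • b)
      = u * t * det3 a d b + w * t * det3 a e b := by
  simp [det3_expand, Pi.add_apply, Pi.smul_apply]; ring

private lemma br3 (b d e : Fin 3 → K) (u w : K) :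
    det3 b (u • d + w • e) e = u * det3 b d e := by
  simp [det3_expand, Pi.add_apply, Pi.smul_apply]; ring

private lemma br4 (a b d e : Fin 3 → K) (s t u w : K) :
    det3 b (u • d + w • e) (s • a + t • b)
      = -(s * (u * det3 a d b + w * det3 a e b)) := by
  simp [det3_expand, Pi.add_apply, Pi.smul_apply]; ring

private lemma br5 (a b e : Fin 3 → K) (s t : K) :
    det3 b (s • a + t • b) e = s * det3 a e b := by
  simp [det3_expand, Pi.add_apply, Pi.smul_apply]; ring

private lemma br6 (a b d : Fin 3 → K) (s t : K) :
    det3 b d (s • a + t • b) = -(s * det3 a d b) := by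
  simp [det3_expand, Pi.add_apply, Pi.smul_apply]; ring

private lemma br7 (a b d e : Fin 3 → K) (s t : K) :
    det3 d (s • a + t • b) e = s * det3 a e d - t * det3 b d e := by
  simp [det3_expand, Pi.add_apply, Pi.smul_apply]; ring

private lemma det3_swap12 (x y z : Fin 3 → K) : det3 x y z = -det3 y x z := by
  simp [det3_expand]; ring

/-- the key intersection point representative -/
private lemma inter_rep (p q r s : Fin 3 → K) (v : Fin 3 → K)
    (h1 : det3 p q v = 0) (h2 : det3 r s v = 0)
    (hm : (p ⨯₃ q) ⨯₃ (r ⨯₃ s) ≠ 0) :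
    ∃ c : K, v = c • ((p ⨯₃ q) ⨯₃ (r ⨯₃ s)) := by
  apply cross_eq_zero_imp _ _ _ hm
  rw [cross_cross_dot, dot_eq_det3, dot_eq_det3, h1, h2]
  simp

end PappusAux

/-- Three points of the projective plane over `K` are collinear iff the determinant of
homogeneous coordinate representatives vanishes. -/
def Col3 {K : Type*} [Field K] (p q r : Projectivization K (Fin 3 → K)) : Prop :=
  Matrix.det (Matrix.of ![p.rep, q.rep, r.rep]) = 0

/-- Pappus' theorem: if p1,p2,p3 lie on a line, p4,p5,p6 lie on another line, the six
points are distinct, none lies on both lines (no point of one triple is collinear with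
two points of the other triple), and p7, p8, p9 are the intersections
p7 = line(p1,p5) ∩ line(p2,p4), p8 = line(p1,p6) ∩ line(p3,p4),
p9 = line(p2,p6) ∩ line(p3,p5), then p7, p8, p9 are collinear. -/
theorem pappus {K : Type*} [Field K]
    (p1 p2 p3 p4 p5 p6 p7 p8 p9 : Projectivization K (Fin 3 → K))
    (hdist : Function.Injective
      (![p1, p2, p3, p4, p5, p6] : Fin 6 → Projectivization K (Fin 3 → K)))
    (h123 : Col3 p1 p2 p3) (h456 : Col3 p4 p5 p6)
    (hgen : ∀ x ∈ ({p1, p2, p3} : Set (Projectivization K (Fin 3 → K))),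
      ∀ y ∈ ({p4, p5, p6} : Set (Projectivization K (Fin 3 → K))),
      ∀ z ∈ ({p4, p5, p6} : Set (Projectivization K (Fin 3 → K))),
        y ≠ z → ¬ Col3 x y z)
    (hgen' : ∀ x ∈ ({p4, p5, p6} : Set (Projectivization K (Fin 3 → K))),
      ∀ y ∈ ({p1, p2, p3} : Set (Projectivization K (Fin 3 → K))),
      ∀ z ∈ ({p1, p2, p3} : Set (Projectivization K (Fin 3 → K))),
        y ≠ z → ¬ Col3 x y z)
    (h7a : Col3 p1 p5 p7) (h7b : Col3 p2 p4 p7)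
    (h8a : Col3 p1 p6 p8) (h8b : Col3 p3 p4 p8)
    (h9a : Col3 p2 p6 p9) (h9b : Col3 p3 p5 p9) :
    Col3 p7 p8 p9 := by
  have d12 : p1 ≠ p2 := by simpa using hdist.ne (show (0 : Fin 6) ≠ 1 by decide)
  have d13 : p1 ≠ p3 := by simpa using hdist.ne (show (0 : Fin 6) ≠ 2 by decide)
  have d23 : p2 ≠ p3 := by simpa using hdist.ne (show (1 : Fin 6) ≠ 2 by decide)
  have d45 : p4 ≠ p5 := by simpa using hdist.ne (show (3 : Fin 6) ≠ 4 by decide)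
  have d24 : p2 ≠ p4 := by simpa using hdist.ne (show (1 : Fin 6) ≠ 3 by decide)
  have d34 : p3 ≠ p4 := by simpa using hdist.ne (show (2 : Fin 6) ≠ 3 by decide)
  have d35 : p3 ≠ p5 := by simpa using hdist.ne (show (2 : Fin 6) ≠ 4 by decide)
  have g512 : ¬ Col3 p5 p1 p2 := hgen' p5 (by simp) p1 (by simp) p2 (by simp) d12
  have g613 : ¬ Col3 p6 p1 p3 := hgen' p6 (by simp) p1 (by simp) p3 (by simp) d13
  have g623 : ¬ Col3 p6 p2 p3 := hgen' p6 (by simp) p2 (by simp) p3 (by simp) d23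
  have haeb : det3 p1.rep p5.rep p2.rep ≠ 0 := by
    intro h
    exact g512 (show det3 p5.rep p1.rep p2.rep = 0 by rw [det3_swap12, h, neg_zero])
  have hafc : det3 p1.rep p6.rep p3.rep ≠ 0 := by
    intro h
    exact g613 (show det3 p6.rep p1.rep p3.rep = 0 by rw [det3_swap12, h, neg_zero])
  have hbfc : det3 p2.rep p6.rep p3.rep ≠ 0 := by
    intro h
    exact g623 (show det3 p6.rep p2.rep p3.rep = 0 by rw [det3_swap12, h, neg_zero])
  obtain ⟨s, t, hc⟩ := span2 p1.rep p2.rep p3.rep h123 (rep_cross_ne _ _ d12)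
  obtain ⟨u, w, hf⟩ := span2 p4.rep p5.rep p6.rep h456 (rep_cross_ne _ _ d45)
  have hm7 : (p1.rep ⨯₃ p5.rep) ⨯₃ (p2.rep ⨯₃ p4.rep) ≠ 0 := by
    rw [cross_cross_expand]
    exact combo_ne_zero _ _ (rep_cross_ne _ _ d24) haeb
  have hm8 : (p1.rep ⨯₃ p6.rep) ⨯₃ (p3.rep ⨯₃ p4.rep) ≠ 0 := by
    rw [cross_cross_expand]
    exact combo_ne_zero _ _ (rep_cross_ne _ _ d34) hafc
  have hm9 : (p2.rep ⨯₃ p6.rep) ⨯₃ (p3.rep ⨯₃ p5.rep) ≠ 0 := by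
    rw [cross_cross_expand]
    exact combo_ne_zero _ _ (rep_cross_ne _ _ d35) hbfc
  obtain ⟨k7, hv7⟩ := inter_rep p1.rep p5.rep p2.rep p4.rep p7.rep h7a h7b hm7
  obtain ⟨k8, hv8⟩ := inter_rep p1.rep p6.rep p3.rep p4.rep p8.rep h8a h8b hm8
  obtain ⟨k9, hv9⟩ := inter_rep p2.rep p6.rep p3.rep p5.rep p9.rep h9a h9b hm9
  show det3 p7.rep p8.rep p9.rep = 0
  rw [hv7, hv8, hv9]
  simp only [cross_cross_expand]
  rw [det3_smul3, det_combo, hf, hc]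
  rw [br1, br2, br3, br4, br5, br6, br7]
  ring
end

section
/- The anti-Pappian superfiguration is unrealizable over every field: there is no field k and no injective map p : {1,...,10} → P²(k) such that the triples listed in L are exactly the maximal collinear triples, where L = {{1,2,3}, {1,4,5}, {1,6,7}, {2,6,10}, {4,9,10}, {3,6,8}, {7,8,9}, {2,4,8}, {2,5,7}, {5,6,9}, {3,7,10}}; indeed, any weak realization with the points 2,...,9 in sufficiently general position forces the additional collinearity of p3, p4, p5 by Pappus' theorem, contradicting the strong realization condition. -/
universe u

/-- The lines of the anti-Pappian superfiguration
{1,2,3}, {1,4,5}, {1,6,7}, {2,6,10}, {4,9,10}, {3,6,8}, {7,8,9}, {2,4,8}, {2,5,7},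
{5,6,9}, {3,7,10}, shifted to 0-indexing on `Fin 10`. -/
def antiPappianLines : Set (Finset (Fin 10)) :=
  {{0, 1, 2}, {0, 3, 4}, {0, 5, 6}, {1, 5, 9}, {3, 8, 9}, {2, 5, 7},
   {6, 7, 8}, {1, 3, 7}, {1, 4, 6}, {4, 5, 8}, {2, 6, 9}}

set_option maxRecDepth 8000
set_option maxHeartbeats 2000000

private lemma det_smul_smul {K : Type*} [Field K] (c d : K) (p q r : Fin 3 → K) :
    Matrix.det (Matrix.of ![c • p, d • q, r]) = c * d * Matrix.det (Matrix.of ![p, q, r]) := by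
  simp [Matrix.det_fin_three, Matrix.vecHead, Matrix.vecTail]; ring

/-- The anti-Pappian superfiguration has no strong realization over any field: there is
no injective map of its ten points to P²(K) under which a triple of distinct points is
collinear exactly when it lies in a line of the superfiguration. -/
theorem anti_pappian_unrealizable :
    ∀ (K : Type u) [Field K],
      ¬ ∃ p : Fin 10 → Projectivization K (Fin 3 → K),
        Function.Injective p ∧
        ∀ a b c : Fin 10, a ≠ b → a ≠ c → b ≠ c →
          (Col3 (p a) (p b) (p c) ↔
            ∃ ℓ ∈ antiPappianLines, ({a, b, c} : Finset (Fin 10)) ⊆ ℓ) := by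
  rintro K _ ⟨p, -, hcol⟩
  classical
  set v : Fin 10 → Fin 3 → K := fun i => (p i).rep with hvdef
  have hvne : ∀ i, v i ≠ 0 := fun i => (p i).rep_nonzero
  have col : ∀ a b c : Fin 10, a ≠ b → a ≠ c → b ≠ c →
      (Matrix.det (Matrix.of ![v a, v b, v c]) = 0 ↔
        ∃ ℓ ∈ antiPappianLines, ({a, b, c} : Finset (Fin 10)) ⊆ ℓ) := hcol
  -- zero brackets for lines
  have hz : ∀ a b c : Fin 10, a ≠ b → a ≠ c → b ≠ c →
      ({a, b, c} : Finset (Fin 10)) ∈ antiPappianLines →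
      Matrix.det (Matrix.of ![v a, v b, v c]) = 0 := by
    intro a b c h1 h2 h3 hm
    exact (col a b c h1 h2 h3).mpr ⟨{a, b, c}, hm, by exact Finset.Subset.refl _⟩
  -- nonzero brackets for non-lines
  have hn : ∀ a b c : Fin 10, a ≠ b → a ≠ c → b ≠ c →
      (¬ ∃ ℓ ∈ antiPappianLines, ({a, b, c} : Finset (Fin 10)) ⊆ ℓ) →
      Matrix.det (Matrix.of ![v a, v b, v c]) ≠ 0 := by
    intro a b c h1 h2 h3 hm hd
    exact hm ((col a b c h1 h2 h3).mp hd)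
  have nonline : ∀ T : Finset (Fin 10),
      (∀ ℓ ∈ [({0,1,2} : Finset (Fin 10)), {0,3,4}, {0,5,6}, {1,5,9}, {3,8,9}, {2,5,7},
        {6,7,8}, {1,3,7}, {1,4,6}, {4,5,8}, {2,6,9}], ¬ T ⊆ ℓ) →
      ¬ ∃ ℓ ∈ antiPappianLines, T ⊆ ℓ := by
    rintro T hT ⟨ℓ, hm, hs⟩
    simp only [antiPappianLines, Set.mem_insert_iff, Set.mem_singleton_iff] at hm
    rcases hm with rfl|rfl|rfl|rfl|rfl|rfl|rfl|rfl|rfl|rfl|rfl <;>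
      exact absurd hs (by simp at hT ⊢; tauto)

  have nonmem : ∀ T : Finset (Fin 10),
      ¬ (T ⊆ {0,1,2} ∨ T ⊆ {0,3,4} ∨ T ⊆ {0,5,6} ∨ T ⊆ {1,5,9} ∨ T ⊆ {3,8,9} ∨ T ⊆ {2,5,7} ∨
         T ⊆ {6,7,8} ∨ T ⊆ {1,3,7} ∨ T ⊆ {1,4,6} ∨ T ⊆ {4,5,8} ∨ T ⊆ {2,6,9}) →
      ¬ ∃ ℓ ∈ antiPappianLines, T ⊆ ℓ := by
    rintro T hT ⟨ℓ, hm, hs⟩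
    simp only [antiPappianLines, Set.mem_insert_iff, Set.mem_singleton_iff] at hm
    apply hT
    rcases hm with rfl|rfl|rfl|rfl|rfl|rfl|rfl|rfl|rfl|rfl|rfl
    · exact Or.inl hs
    · exact Or.inr (Or.inl hs)
    · exact Or.inr (Or.inr (Or.inl hs))
    · exact Or.inr (Or.inr (Or.inr (Or.inl hs)))
    · exact Or.inr (Or.inr (Or.inr (Or.inr (Or.inl hs))))
    · exact Or.inr (Or.inr (Or.inr (Or.inr (Or.inr (Or.inl hs)))))
    · exact Or.inr (Or.inr (Or.inr (Or.inr (Or.inr (Or.inr (Or.inl hs))))))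
    · exact Or.inr (Or.inr (Or.inr (Or.inr (Or.inr (Or.inr (Or.inr (Or.inl hs)))))))
    · exact Or.inr (Or.inr (Or.inr (Or.inr (Or.inr (Or.inr (Or.inr (Or.inr (Or.inl hs))))))))
    · exact Or.inr (Or.inr (Or.inr (Or.inr (Or.inr (Or.inr (Or.inr (Or.inr (Or.inr (Or.inl hs)))))))))
    · exact Or.inr (Or.inr (Or.inr (Or.inr (Or.inr (Or.inr (Or.inr (Or.inr (Or.inr (Or.inr (hs))))))))))
  -- the basis matrix
  set M : Matrix (Fin 3) (Fin 3) K := Matrix.of ![v 1, v 2, v 3] with hMdef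
  have hM : M.det ≠ 0 := hn 1 2 3 (by decide) (by decide) (by decide) (nonmem _ (by decide))
  have hMu : IsUnit M.det := isUnit_iff_ne_zero.mpr hM
  set w : Fin 10 → Fin 3 → K := fun i => Matrix.vecMul (v i) M⁻¹ with hwdef
  have hmat : ∀ a b c : Fin 10,
      Matrix.of ![w a, w b, w c] = Matrix.of ![v a, v b, v c] * M⁻¹ := by
    intro a b c
    ext i j
    fin_cases i <;> simp [hwdef, Matrix.mul_apply, Matrix.vecMul, dotProduct]
  have hdet : ∀ a b c : Fin 10, Matrix.det (Matrix.of ![w a, w b, w c]) =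
      Matrix.det (Matrix.of ![v a, v b, v c]) * (M.det)⁻¹ := by
    intro a b c
    rw [hmat, Matrix.det_mul, Matrix.det_nonsing_inv, Ring.inverse_eq_inv']
  have wz : ∀ a b c : Fin 10, a ≠ b → a ≠ c → b ≠ c →
      ({a, b, c} : Finset (Fin 10)) ∈ antiPappianLines →
      Matrix.det (Matrix.of ![w a, w b, w c]) = 0 := by
    intro a b c h1 h2 h3 hm
    rw [hdet, hz a b c h1 h2 h3 hm, zero_mul]
  have wn : ∀ a b c : Fin 10, a ≠ b → a ≠ c → b ≠ c →
      (¬ ∃ ℓ ∈ antiPappianLines, ({a, b, c} : Finset (Fin 10)) ⊆ ℓ) →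
      Matrix.det (Matrix.of ![w a, w b, w c]) ≠ 0 := by
    intro a b c h1 h2 h3 hm
    rw [hdet]
    exact mul_ne_zero (hn a b c h1 h2 h3 hm) (inv_ne_zero hM)
  have hMinv : M * M⁻¹ = 1 := Matrix.mul_nonsing_inv M hMu
  have hu1 : w 1 = ![1, 0, 0] := by
    have h1 : w 1 = fun j => (M * M⁻¹) 0 j := by
      funext j; simp [hwdef, hMdef, Matrix.mul_apply, Matrix.vecMul, dotProduct]
    rw [h1, hMinv]
    funext j; fin_cases j <;> simp [Matrix.one_apply]
  have hu2 : w 2 = ![0, 1, 0] := by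
    have h1 : w 2 = fun j => (M * M⁻¹) 1 j := by
      funext j; simp [hwdef, hMdef, Matrix.mul_apply, Matrix.vecMul, dotProduct]
    rw [h1, hMinv]
    funext j; fin_cases j <;> simp [Matrix.one_apply]
  have hu3 : w 3 = ![0, 0, 1] := by
    have h1 : w 3 = fun j => (M * M⁻¹) 2 j := by
      funext j; simp [hwdef, hMdef, Matrix.mul_apply, Matrix.vecMul, dotProduct]
    rw [h1, hMinv]
    funext j; fin_cases j <;> simp [Matrix.one_apply]
  have hune : ∀ i, w i ≠ 0 := by
    intro i h
    apply hvne i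
    have : v i = Matrix.vecMul (w i) M := by
      rw [hwdef]
      simp only []
      rw [Matrix.vecMul_vecMul, Matrix.nonsing_inv_mul M hMu, Matrix.vecMul_one]
    rw [this, h, Matrix.zero_vecMul]

  -- line-bracket facts
  have z012 := wz 0 1 2 (by decide) (by decide) (by decide) (by simp [antiPappianLines])
  have z034 := wz 0 3 4 (by decide) (by decide) (by decide) (by simp [antiPappianLines])
  have z056 := wz 0 5 6 (by decide) (by decide) (by decide) (by simp [antiPappianLines])
  have z159 := wz 1 5 9 (by decide) (by decide) (by decide) (by simp [antiPappianLines])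
  have z389 := wz 3 8 9 (by decide) (by decide) (by decide) (by simp [antiPappianLines])
  have z257 := wz 2 5 7 (by decide) (by decide) (by decide) (by simp [antiPappianLines])
  have z678 := wz 6 7 8 (by decide) (by decide) (by decide) (by simp [antiPappianLines])
  have z137 := wz 1 3 7 (by decide) (by decide) (by decide) (by simp [antiPappianLines])
  have z146 := wz 1 4 6 (by decide) (by decide) (by decide) (by simp [antiPappianLines])
  have z458 := wz 4 5 8 (by decide) (by decide) (by decide) (by simp [antiPappianLines])
  have z269 := wz 2 6 9 (by decide) (by decide) (by decide) (by simp [antiPappianLines])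
  -- nonzero scalar coordinates
  have ha : w 4 0 ≠ 0 := by
    intro h
    apply wn 2 3 4 (by decide) (by decide) (by decide) (nonmem _ (by decide))
    rw [hu2, hu3]; simp [Matrix.det_fin_three, Matrix.vecHead, Matrix.vecTail, h]
  have hb : w 4 1 ≠ 0 := by
    intro h
    apply wn 1 3 4 (by decide) (by decide) (by decide) (nonmem _ (by decide))
    rw [hu1, hu3]; simp [Matrix.det_fin_three, Matrix.vecHead, Matrix.vecTail, h]
  have hc : w 4 2 ≠ 0 := by
    intro h
    apply wn 1 2 4 (by decide) (by decide) (by decide) (nonmem _ (by decide))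
    rw [hu1, hu2]; simp [Matrix.det_fin_three, Matrix.vecHead, Matrix.vecTail, h]
  have hy5 : w 5 1 ≠ 0 := by
    intro h
    apply wn 1 3 5 (by decide) (by decide) (by decide) (nonmem _ (by decide))
    rw [hu1, hu3]; simp [Matrix.det_fin_three, Matrix.vecHead, Matrix.vecTail, h]
  have hz5 : w 5 2 ≠ 0 := by
    intro h
    apply wn 1 2 5 (by decide) (by decide) (by decide) (nonmem _ (by decide))
    rw [hu1, hu2]; simp [Matrix.det_fin_three, Matrix.vecHead, Matrix.vecTail, h]
  have h145 : w 4 1 * w 5 2 - w 4 2 * w 5 1 ≠ 0 := by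
    intro h
    apply wn 1 4 5 (by decide) (by decide) (by decide) (nonmem _ (by decide))
    rw [hu1]; simp [Matrix.det_fin_three, Matrix.vecHead, Matrix.vecTail]; linear_combination h
  -- coordinates of point 0
  have hz0 : w 0 2 = 0 := by
    have h := z012; rw [hu1, hu2] at h; simp [Matrix.det_fin_three, Matrix.vecHead, Matrix.vecTail] at h
    linear_combination h
  have h034 : w 4 0 * w 0 1 = w 4 1 * w 0 0 := by
    have h := z034; rw [hu3] at h; simp [Matrix.det_fin_three, Matrix.vecHead, Matrix.vecTail] at h
    linear_combination h
  have hx0 : w 0 0 ≠ 0 := by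
    intro h
    apply hune 0
    have hy0 : w 0 1 = 0 := by
      apply mul_left_cancel₀ ha
      linear_combination h034 + w 4 1 * h
    funext j; fin_cases j
    · simpa using h
    · simpa using hy0
    · simpa using hz0
  -- point 7
  have hy7 : w 7 1 = 0 := by
    have h := z137; rw [hu1, hu3] at h; simp [Matrix.det_fin_three, Matrix.vecHead, Matrix.vecTail] at h
    linear_combination h
  have h257 : w 5 2 * w 7 0 = w 5 0 * w 7 2 := by
    have h := z257; rw [hu2] at h; simp [Matrix.det_fin_three, Matrix.vecHead, Matrix.vecTail] at h
    linear_combination h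
  have hz7 : w 7 2 ≠ 0 := by
    intro hz
    apply hune 7
    have hx7 : w 7 0 = 0 := by
      apply mul_left_cancel₀ hz5
      linear_combination h257 + w 5 0 * hz
    funext j; fin_cases j
    · simpa using hx7
    · simpa using hy7
    · simpa using hz
  -- point 6
  have h146 : w 4 1 * w 6 2 = w 4 2 * w 6 1 := by
    have h := z146; rw [hu1] at h; simp [Matrix.det_fin_three, Matrix.vecHead, Matrix.vecTail] at h
    linear_combination h
  have h056 : w 4 0 * (w 5 1 * w 6 2 - w 5 2 * w 6 1) = w 4 1 * (w 5 0 * w 6 2 - w 5 2 * w 6 0) := by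
    have h := z056; simp [Matrix.det_fin_three, Matrix.vecHead, Matrix.vecTail] at h
    rw [hz0] at h
    apply mul_left_cancel₀ hx0
    linear_combination w 4 0 * h + (w 5 0 * w 6 2 - w 5 2 * w 6 0) * h034
  have hz6 : w 6 2 ≠ 0 := by
    intro hz
    apply hune 6
    have hy6 : w 6 1 = 0 := by
      apply mul_left_cancel₀ hc
      linear_combination -h146 + w 4 1 * hz
    have hx6 : w 6 0 = 0 := by
      apply mul_left_cancel₀ (mul_ne_zero hb hz5)
      linear_combination h056 - (w 4 0 * w 5 1 - w 4 1 * w 5 0) * hz + w 4 0 * w 5 2 * hy6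
    funext j; fin_cases j
    · simpa using hx6
    · simpa using hy6
    · simpa using hz
  -- point 9
  have h159 : w 5 1 * w 9 2 = w 5 2 * w 9 1 := by
    have h := z159; rw [hu1] at h; simp [Matrix.det_fin_three, Matrix.vecHead, Matrix.vecTail] at h
    linear_combination h
  have h269 : w 6 2 * w 9 0 = w 6 0 * w 9 2 := by
    have h := z269; rw [hu2] at h; simp [Matrix.det_fin_three, Matrix.vecHead, Matrix.vecTail] at h
    linear_combination h
  have hz9 : w 9 2 ≠ 0 := by
    intro hz
    apply hune 9
    have hy9 : w 9 1 = 0 := by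
      apply mul_left_cancel₀ hz5
      linear_combination -h159 + w 5 1 * hz
    have hx9 : w 9 0 = 0 := by
      apply mul_left_cancel₀ hz6
      linear_combination h269 + w 6 0 * hz
    funext j; fin_cases j
    · simpa using hx9
    · simpa using hy9
    · simpa using hz
  -- closed forms
  have hx6f : w 4 1 * w 4 2 * w 5 2 * w 6 0 = w 6 2 * (w 4 1 * w 4 2 * w 5 0 - w 4 0 * w 4 2 * w 5 1 + w 4 0 * w 4 1 * w 5 2) := by
    linear_combination w 4 2 * h056 - w 4 0 * w 5 2 * h146
  have hx9f : w 4 1 * w 4 2 * w 5 2 * w 9 0 = w 9 2 * (w 4 1 * w 4 2 * w 5 0 - w 4 0 * w 4 2 * w 5 1 + w 4 0 * w 4 1 * w 5 2) := by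
    apply mul_left_cancel₀ hz6
    linear_combination w 4 1 * w 4 2 * w 5 2 * h269 + w 9 2 * hx6f
  have hu6v : w 6 = (w 6 2 / (w 4 1 * w 4 2 * w 5 2)) •
      ![(w 4 1 * w 4 2 * w 5 0 - w 4 0 * w 4 2 * w 5 1 + w 4 0 * w 4 1 * w 5 2), w 4 1 * w 4 1 * w 5 2, w 4 1 * w 4 2 * w 5 2] := by
    have hbcz : w 4 1 * w 4 2 * w 5 2 ≠ 0 := mul_ne_zero (mul_ne_zero hb hc) hz5
    funext j; fin_cases j
    · simp only [Fin.zero_eta, Fin.mk_one, Fin.isValue, Pi.smul_apply, Matrix.cons_val_zero, smul_eq_mul]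
      field_simp
      linear_combination hx6f
    · simp only [Fin.zero_eta, Fin.mk_one, Fin.isValue, Pi.smul_apply, Matrix.cons_val_one, Matrix.cons_val_zero, Matrix.head_cons, smul_eq_mul]
      field_simp
      linear_combination -h146
    · show w 6 2 = _
      simp only [Fin.zero_eta, Fin.mk_one, Fin.isValue, Pi.smul_apply, Matrix.cons_val_two, Matrix.tail_cons, Matrix.head_cons, smul_eq_mul]
      field_simp
      rfl
  have hu7v : w 7 = (w 7 2 / w 5 2) • ![w 5 0, 0, w 5 2] := by
    funext j; fin_cases j
    · simp only [Fin.zero_eta, Fin.mk_one, Fin.isValue, Pi.smul_apply, Matrix.cons_val_zero, smul_eq_mul]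
      field_simp
      linear_combination h257
    · simp only [Fin.zero_eta, Fin.mk_one, Fin.isValue, Pi.smul_apply, Matrix.cons_val_one, Matrix.head_cons, smul_eq_mul]
      simpa using hy7
    · show w 7 2 = _
      simp only [Fin.zero_eta, Fin.mk_one, Fin.isValue, Pi.smul_apply, Matrix.cons_val_two, Matrix.tail_cons, Matrix.head_cons, smul_eq_mul]
      field_simp
      rfl
  -- derived collinearity constraints on point 8
  have E2 : Matrix.det (Matrix.of ![![(w 4 1 * w 4 2 * w 5 0 - w 4 0 * w 4 2 * w 5 1 + w 4 0 * w 4 1 * w 5 2), w 4 1 * w 4 1 * w 5 2, w 4 1 * w 4 2 * w 5 2],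
      ![w 5 0, 0, w 5 2], w 8]) = 0 := by
    have h := z678
    rw [hu6v, hu7v, det_smul_smul] at h
    exact (mul_eq_zero.mp h).resolve_left (mul_ne_zero
      (div_ne_zero hz6 (mul_ne_zero (mul_ne_zero hb hc) hz5)) (div_ne_zero hz7 hz5))
  simp [Matrix.det_fin_three, Matrix.vecHead, Matrix.vecTail] at E2
  have h389 : w 8 0 * w 9 1 = w 8 1 * w 9 0 := by
    have h := z389; rw [hu3] at h; simp [Matrix.det_fin_three, Matrix.vecHead, Matrix.vecTail] at h
    linear_combination h
  have E3 : w 8 0 * (w 4 1 * w 4 2 * w 5 1) = w 8 1 * (w 4 1 * w 4 2 * w 5 0 - w 4 0 * w 4 2 * w 5 1 + w 4 0 * w 4 1 * w 5 2) := by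
    apply mul_left_cancel₀ hz9
    linear_combination w 4 1 * w 4 2 * w 5 2 * h389 + w 4 1 * w 4 2 * w 8 0 * h159 + w 8 1 * hx9f
  have h458 := z458
  simp [Matrix.det_fin_three, Matrix.vecHead, Matrix.vecTail] at h458
  -- the final singular matrix
  set A : Matrix (Fin 3) (Fin 3) K := Matrix.of
    ![![w 4 1 * w 5 2 - w 4 2 * w 5 1, w 4 2 * w 5 0 - w 4 0 * w 5 2, w 4 0 * w 5 1 - w 4 1 * w 5 0],
      ![w 4 1 * w 4 1 * w 5 2 * w 5 2, w 4 0 * w 5 2 * (w 4 2 * w 5 1 - w 4 1 * w 5 2),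
        -(w 4 1 * w 4 1 * w 5 0 * w 5 2)],
      ![w 4 1 * w 4 2 * w 5 1, -(w 4 1 * w 4 2 * w 5 0 - w 4 0 * w 4 2 * w 5 1 + w 4 0 * w 4 1 * w 5 2), 0]] with hAdef
  have hA0 : A.det = 0 := by
    apply Matrix.exists_mulVec_eq_zero_iff.mp
    refine ⟨w 8, hune 8, ?_⟩
    funext i; fin_cases i
    · simp [hAdef, Matrix.mulVec, dotProduct, Fin.sum_univ_three]
      linear_combination h458
    · simp [hAdef, Matrix.mulVec, dotProduct, Fin.sum_univ_three]
      linear_combination E2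
    · simp [hAdef, Matrix.mulVec, dotProduct, Fin.sum_univ_three]
      linear_combination E3
  have hAval : A.det = -(w 4 0 ^ 2 * w 4 1 * w 5 1 * w 5 2 * (w 4 1 * w 5 2 - w 4 2 * w 5 1) ^ 2) := by
    rw [hAdef]
    simp only [Matrix.det_fin_three, Matrix.of_apply, Matrix.cons_val', Matrix.cons_val_zero,
      Matrix.cons_val_one, Matrix.head_cons, Matrix.empty_val', Matrix.cons_val_fin_one,
      Matrix.head_fin_const, Matrix.cons_val_two, Matrix.tail_cons]
    ring
  have hP : w 4 0 ^ 2 * w 4 1 * w 5 1 * w 5 2 * (w 4 1 * w 5 2 - w 4 2 * w 5 1) ^ 2 = 0 := by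
    linear_combination hAval - hA0
  exact (mul_ne_zero (mul_ne_zero (mul_ne_zero (mul_ne_zero
    (pow_ne_zero 2 ha) hb) hy5) hz5) (pow_ne_zero 2 h145)) hP
end
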